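/- Under the invariant τ_t ≤ τ* and the event sup_τ |G_t(τ) − G_t*(τ)| ≤ ε_t for all t, the upper confidence CDF Ḡ_t(τ) = G_t(τ) + ε_t evaluated at the chosen threshold satisfies the two-sided bound 1 − α − 2/t ≤ Ḡ_t(τ_t) ≤ 1 − α + 2ε_t, where ε_t = sqrt(log(2/δ)/(2t)). -/

import Mathlib

private lemma stmt4_aux_sqrt (t k : ℝ) (h2t : 2 ≤ t) (hkcast : k = t - 1) (hkpos : 0 < k) :
    Real.sqrt (t/k) ≤ 1 + 1/t := by
  have htpos : (0:ℝ) < t := by linarith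
  rw [Real.sqrt_le_left (by positivity)]
  rw [div_le_iff₀ hkpos, hkcast]
  have hexp : (1 + 1/t)^2 * (t - 1) = (t^3 + t^2 - t - 1)/t^2 := by
    field_simp
    ring
  rw [hexp, le_div_iff₀ (by positivity)]
  nlinarith

set_option maxHeartbeats 1000000 in
/-- Lemma 4.3: under the invariant τ_t ≤ τ* and the good event,
the upper-confidence CDF at the chosen threshold satisfies
1 − α − 2/t ≤ Ḡ_t(τ_t) ≤ 1 − α + 2ε_t. -/
theorem stmt_4 (T : ℕ) (α δ : ℝ) (hα : α ∈ Set.Ico (0 : ℝ) 1) (hδ : 0 < δ)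
    (G : ℝ → ℝ) (hGmono : Monotone G) (hGcont : Continuous G)
    (s : ℕ → ℝ) (τ : ℕ → ℝ) (τstar : ℝ)
    (hτstar : G τstar = 1 - α)
    (ε : ℕ → ℝ) (hε : ∀ t : ℕ, ε t = Real.sqrt (Real.log (2 / δ) / (2 * t)))
    (Gemp : ℕ → ℝ → ℝ)
    (hGemp : ∀ k : ℕ, ∀ x : ℝ,
      Gemp k x = (1 / (k : ℝ)) * ∑ j ∈ Finset.Icc 1 k, (if max (τ k) (s j) ≤ x then (1 : ℝ) else 0))
    (Gtr : ℕ → ℝ → ℝ)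
    (hGtr : ∀ k x, Gtr k x = if x < τ k then 0 else G x)
    (hbase : τ 1 ≤ τstar)  -- τ₁ = -∞
    (hrec : ∀ k, 1 ≤ k → k < T →
      τ (k + 1) = max (sSup {x : ℝ | Gemp k x + ε k ≤ 1 - α}) (τ k))
    (hinv : ∀ t, 1 ≤ t → t ≤ T → τ t ≤ τstar)
    (hevent : ∀ t, 1 ≤ t → t ≤ T → ∀ x : ℝ, |Gemp t x - Gtr t x| ≤ ε t) :
    ∀ t, 1 ≤ t → t ≤ T →
      1 - α - 2 / t ≤ Gemp t (τ t) + ε t ∧ Gemp t (τ t) + ε t ≤ 1 - α + 2 * ε t := by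
  have hε0 : ∀ k : ℕ, 0 ≤ ε k := fun k => (hε k) ▸ Real.sqrt_nonneg _
  have hGemp_nonneg : ∀ k : ℕ, ∀ x : ℝ, 0 ≤ Gemp k x := by
    intro k x
    rw [hGemp]
    apply mul_nonneg (by positivity)
    apply Finset.sum_nonneg
    intro j _
    split <;> norm_num
  -- if all censored samples are ≤ x, the empirical CDF is 1
  have hfull : ∀ m : ℕ, ∀ x : ℝ, 1 ≤ m →
      (∀ j ∈ Finset.Icc 1 m, max (τ m) (s j) ≤ x) → Gemp m x = 1 := by
    intro m x hm hall
    have hmpos : (0:ℝ) < m := by exact_mod_cast hm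
    rw [hGemp]
    rw [Finset.sum_congr rfl (fun j hj => if_pos (hall j hj))]
    rw [Finset.sum_const, Nat.card_Icc]
    simp only [Nat.add_sub_cancel, nsmul_eq_mul, mul_one]
    field_simp
  intro t ht1 htT
  have htpos : (0:ℝ) < t := by exact_mod_cast ht1
  have hτt_le : τ t ≤ τstar := hinv t ht1 htT
  have hGtr_t : Gtr t (τ t) = G (τ t) := by rw [hGtr]; simp
  have hev := hevent t ht1 htT (τ t)
  rw [hGtr_t] at hev
  have habs := abs_le.mp hev
  have hGτ_le : G (τ t) ≤ 1 - α := hτstar ▸ hGmono hτt_le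
  have hupper : Gemp t (τ t) + ε t ≤ 1 - α + 2 * ε t := by
    have h1 : Gemp t (τ t) ≤ G (τ t) + ε t := by linarith [habs.2]
    linarith
  refine ⟨?_, hupper⟩
  -- lower bound
  by_cases htriv : 1 - α - 2 / t ≤ ε t
  · linarith [hGemp_nonneg t (τ t)]
  push_neg at htriv
  have ht2 : 2 ≤ t := by
    by_contra h
    push_neg at h
    interval_cases t
    simp only [Nat.cast_one] at htriv
    have h2 : (2:ℝ)/1 = 2 := by norm_num
    rw [h2] at htriv
    linarith [hε0 1, hα.1]
  obtain ⟨k, hkt⟩ : ∃ k, t = k + 1 := ⟨t - 1, by omega⟩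
  have hk1 : 1 ≤ k := by omega
  have hkT : k < T := by omega
  have hkpos : (0:ℝ) < k := by exact_mod_cast hk1
  have hkcast : (k:ℝ) = (t:ℝ) - 1 := by
    have : (t:ℝ) = (k:ℝ) + 1 := by exact_mod_cast congrArg (Nat.cast : ℕ → ℝ) hkt
    linarith
  have hrec' : τ t = max (sSup {x : ℝ | Gemp k x + ε k ≤ 1 - α}) (τ k) := by
    rw [hkt]; exact hrec k hk1 hkT
  have hτk_le : τ k ≤ τ t := by rw [hrec']; exact le_max_right _ _
  set L := Real.log (2 / δ) with hL
  -- case: ε k ≥ 1 - α  leads to contradiction with htriv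
  by_cases hv : 1 - α ≤ ε k
  · exfalso
    have hLpos : 0 < L := by
      by_contra h
      push_neg at h
      have hz : ε k = 0 := by
        rw [hε, Real.sqrt_eq_zero']
        exact div_nonpos_of_nonpos_of_nonneg h (by positivity)
      rw [hz] at hv
      linarith [hα.2]
    have hεt : ε t = Real.sqrt (L / (2*k)) * Real.sqrt ((k:ℝ)/t) := by
      rw [hε, ← Real.sqrt_mul (by positivity)]
      congr 1
      field_simp
    have hεk : ε k = Real.sqrt (L / (2*k)) := hε k
    have hfrac : (k:ℝ)/t ≤ 1 := by
      rw [div_le_one htpos]; linarith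
    have hfrac0 : (0:ℝ) ≤ (k:ℝ)/t := by positivity
    have hsq : (k:ℝ)/t ≤ Real.sqrt ((k:ℝ)/t) := by
      rw [Real.le_sqrt hfrac0 hfrac0]
      nlinarith
    have hεt_ge : (1 - α) * ((k:ℝ)/t) ≤ ε t := by
      rw [hεt]
      have h1 : (1 - α) * ((k:ℝ)/t) ≤ Real.sqrt (L / (2*k)) * ((k:ℝ)/t) := by
        apply mul_le_mul_of_nonneg_right _ hfrac0
        rw [← hεk]; exact hv
      have h2 : Real.sqrt (L / (2*k)) * ((k:ℝ)/t) ≤ Real.sqrt (L / (2*k)) * Real.sqrt ((k:ℝ)/t) :=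
        mul_le_mul_of_nonneg_left hsq (Real.sqrt_nonneg _)
      linarith
    have heq : (1 - α) * ((k:ℝ)/t) = (1-α) - (1-α)/t := by
      rw [hkcast]; field_simp
    rw [heq] at hεt_ge
    have h1t : (1-α)/t ≤ 2/t := by
      rw [div_le_div_iff_of_pos_right htpos]
      linarith [hα.1]
    linarith
  push_neg at hv
  -- ε k < 1 - α
  have hind_t : Gemp t (τ t) = (1/(t:ℝ)) * ∑ j ∈ Finset.Icc 1 t, (if s j ≤ τ t then (1:ℝ) else 0) := by
    rw [hGemp]
    congr 1
    apply Finset.sum_congr rfl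
    intro j _
    congr 1
    simp [max_le_iff]
  have hind_k : Gemp k (τ t) = (1/(k:ℝ)) * ∑ j ∈ Finset.Icc 1 k, (if s j ≤ τ t then (1:ℝ) else 0) := by
    rw [hGemp]
    congr 1
    apply Finset.sum_congr rfl
    intro j _
    congr 1
    simp only [max_le_iff, eq_iff_iff, and_iff_right_iff_imp]
    intro _; exact hτk_le
  have hsum_mono : ∑ j ∈ Finset.Icc 1 k, (if s j ≤ τ t then (1:ℝ) else 0)
      ≤ ∑ j ∈ Finset.Icc 1 t, (if s j ≤ τ t then (1:ℝ) else 0) := by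
    apply Finset.sum_le_sum_of_subset_of_nonneg
    · apply Finset.Icc_subset_Icc_right; omega
    · intro j _ _; split <;> norm_num
  have hGt_ge : (k:ℝ)/t * Gemp k (τ t) ≤ Gemp t (τ t) := by
    rw [hind_t, hind_k]
    have heq : (k:ℝ)/t * ((1/(k:ℝ)) * ∑ j ∈ Finset.Icc 1 k, (if s j ≤ τ t then (1:ℝ) else 0))
        = (1/(t:ℝ)) * ∑ j ∈ Finset.Icc 1 k, (if s j ≤ τ t then (1:ℝ) else 0) := by
      field_simp
    rw [heq]
    exact mul_le_mul_of_nonneg_left hsum_mono (by positivity)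
  by_cases hpos : 0 < α + ε k
  · -- main case: Gemp k (τ t) ≥ 1 - α - ε k
    have hstar : 1 - α - ε k ≤ Gemp k (τ t) := by
      by_contra hcon
      push_neg at hcon
      set A : Set ℝ := {x : ℝ | Gemp k x + ε k ≤ 1 - α} with hA
      have hne : (Finset.Icc 1 k).Nonempty := ⟨1, by simp [hk1]⟩
      set M : ℝ := (Finset.Icc 1 k).sup' hne (fun j => max (τ k) (s j)) with hM
      have hMub : ∀ j ∈ Finset.Icc 1 k, max (τ k) (s j) ≤ M := by
        intro j hj
        exact Finset.le_sup' (fun j => max (τ k) (s j)) hj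
      have hbdd : BddAbove A := by
        refine ⟨M, fun x hx => ?_⟩
        by_contra hxM
        push_neg at hxM
        have hone : Gemp k x = 1 :=
          hfull k x hk1 (fun j hj => le_trans (hMub j hj) (le_of_lt hxM))
        rw [Set.mem_setOf_eq, hone] at hx
        linarith
      set F : Finset ℕ := (Finset.Icc 1 k).filter (fun j => τ t < max (τ k) (s j)) with hF
      have hη : ∃ η : ℝ, 0 < η ∧ ∀ j ∈ Finset.Icc 1 k,
          max (τ k) (s j) ≤ τ t + η / 2 → max (τ k) (s j) ≤ τ t := by
        by_cases hFne : F.Nonempty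
        · refine ⟨F.inf' hFne (fun j => max (τ k) (s j) - τ t), ?_, ?_⟩
          · rw [Finset.lt_inf'_iff]
            intro j hj
            rw [hF, Finset.mem_filter] at hj
            linarith [hj.2]
          · intro j hj hle
            by_contra hgt
            push_neg at hgt
            have hjF : j ∈ F := by
              rw [hF, Finset.mem_filter]
              exact ⟨hj, by simpa using hgt⟩
            have h2 := Finset.inf'_le (fun j => max (τ k) (s j) - τ t) hjF
            linarith
        · refine ⟨1, one_pos, ?_⟩
          intro j hj _
          by_contra hgt
          push_neg at hgt
          exact hFne ⟨j, by rw [hF, Finset.mem_filter]; exact ⟨hj, by simpa using hgt⟩⟩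
      obtain ⟨η, hηpos, hηprop⟩ := hη
      have hconst : Gemp k (τ t + η/2) = Gemp k (τ t) := by
        rw [hGemp, hGemp]
        congr 1
        apply Finset.sum_congr rfl
        intro j hj
        by_cases hle : max (τ k) (s j) ≤ τ t
        · rw [if_pos (le_trans hle (by linarith)), if_pos hle]
        · rw [if_neg, if_neg hle]
          intro hc
          exact hle (hηprop j hj hc)
      have hmem : τ t + η/2 ∈ A := by
        rw [Set.mem_setOf_eq, hconst]
        linarith
      have hle_sup : τ t + η/2 ≤ sSup A := le_csSup hbdd hmem
      have hsup_le : sSup A ≤ τ t := by rw [hrec']; exact le_max_left _ _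
      linarith
    -- ε k ≤ ε t + 1/t
    have hεdiff : ε k ≤ ε t + 1/t := by
      by_cases hLpos : 0 < L
      · have hεk_eq : ε k = ε t * Real.sqrt ((t:ℝ)/k) := by
          rw [hε, hε, ← Real.sqrt_mul (by positivity)]
          congr 1
          field_simp
        have hdivle : L/(2*(t:ℝ)) ≤ L/(2*(k:ℝ)) := by
          apply div_le_div_of_nonneg_left (le_of_lt hLpos) (by positivity)
          rw [hkcast]; linarith
        have hεt_le : ε t ≤ ε k := by
          rw [hε, hε]
          exact Real.sqrt_le_sqrt hdivle
        have hεt1 : ε t ≤ 1 := by linarith [hα.1]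
        have h2t : (2:ℝ) ≤ t := by exact_mod_cast ht2
        have hsqle : Real.sqrt ((t:ℝ)/k) ≤ 1 + 1/t :=
          stmt4_aux_sqrt t k h2t hkcast hkpos
        calc ε k = ε t * Real.sqrt ((t:ℝ)/k) := hεk_eq
          _ ≤ ε t * (1 + 1/t) := mul_le_mul_of_nonneg_left hsqle (hε0 t)
          _ = ε t + ε t * (1/t) := by ring
          _ ≤ ε t + 1 * (1/t) := by
              apply add_le_add_right
              apply mul_le_mul_of_nonneg_right hεt1 (by positivity)
          _ = ε t + 1/t := by ring
      · push_neg at hLpos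
        have hzk : ε k = 0 := by
          rw [hε, Real.sqrt_eq_zero']
          exact div_nonpos_of_nonpos_of_nonneg hLpos (by positivity)
        have hzt : ε t = 0 := by
          rw [hε, Real.sqrt_eq_zero']
          exact div_nonpos_of_nonpos_of_nonneg hLpos (by positivity)
        rw [hzk, hzt]
        positivity
    -- combine
    have h1 : (k:ℝ)/t * (1 - α - ε k) ≤ (k:ℝ)/t * Gemp k (τ t) :=
      mul_le_mul_of_nonneg_left hstar (by positivity)
    have h2 : (k:ℝ)/t * (1 - α - ε k) = (1 - α - ε k) - (1 - α - ε k)/t := by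
      rw [hkcast]; field_simp
    have h3 : (1 - α - ε k)/t ≤ 1/t := by
      rw [div_le_div_iff_of_pos_right htpos]
      linarith [hα.1, hε0 k]
    have h4 : 1/(t:ℝ) + 1/t ≤ 2/t := by
      rw [← add_div]
      apply le_of_eq
      norm_num
    linarith [hGt_ge]
  · -- degenerate case α = 0, ε ≡ 0
    push_neg at hpos
    have hα0 : α = 0 := le_antisymm (by linarith [hε0 k]) hα.1
    have hεk0 : ε k = 0 := le_antisymm (by linarith [hα.1]) (hε0 k)
    have hLneg : L ≤ 0 := by
      rw [hε, Real.sqrt_eq_zero'] at hεk0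
      by_contra hc
      push_neg at hc
      have : 0 < L / (2*(k:ℝ)) := by positivity
      linarith
    have hεt0 : ε t = 0 := by
      rw [hε, Real.sqrt_eq_zero']
      exact div_nonpos_of_nonpos_of_nonneg hLneg (by positivity)
    have hev0 : ∀ x : ℝ, Gemp t x = Gtr t x := by
      intro x
      have h1 := hevent t ht1 htT x
      rw [hεt0] at h1
      exact sub_eq_zero.mp (abs_eq_zero.mp (le_antisymm h1 (abs_nonneg _)))
    have hall : ∀ j ∈ Finset.Icc 1 t, s j ≤ τ t := by
      intro j0 hj0
      by_contra hgt
      push_neg at hgt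
      set c : ℝ := s j0 with hc
      have hcτ : τ t < c := hgt
      have hstep : ∀ x ∈ Set.Ioo (τ t) c, G x ≤ G c - 1/t := by
        intro x hx
        have hGx : G x = Gemp t x := by
          rw [hev0 x, hGtr, if_neg (not_lt.mpr (le_of_lt hx.1))]
        have hGc : G c = Gemp t c := by
          rw [hev0 c, hGtr, if_neg (not_lt.mpr (le_of_lt hcτ))]
        set Sx : ℝ := ∑ j ∈ Finset.Icc 1 t, (if max (τ t) (s j) ≤ x then (1:ℝ) else 0) with hSx
        set Sc : ℝ := ∑ j ∈ Finset.Icc 1 t, (if max (τ t) (s j) ≤ c then (1:ℝ) else 0) with hSc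
        have hterm : ∀ j ∈ Finset.Icc 1 t,
            (0:ℝ) ≤ (if max (τ t) (s j) ≤ c then (1:ℝ) else 0) - (if max (τ t) (s j) ≤ x then (1:ℝ) else 0) := by
          intro j _
          by_cases h : max (τ t) (s j) ≤ x
          · rw [if_pos h, if_pos (le_trans h (le_of_lt hx.2))]
            norm_num
          · rw [if_neg h]
            split <;> norm_num
        have hj0term : (1:ℝ) ≤ (if max (τ t) (s j0) ≤ c then (1:ℝ) else 0) - (if max (τ t) (s j0) ≤ x then (1:ℝ) else 0) := by
          rw [if_pos (max_le (le_of_lt hcτ) (le_of_eq hc.symm))]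
          rw [if_neg]
          · norm_num
          · push_neg
            calc x < c := hx.2
              _ ≤ max (τ t) (s j0) := by rw [hc]; exact le_max_right _ _
        have hsum : Sx + 1 ≤ Sc := by
          have hsingle := Finset.single_le_sum hterm hj0
          rw [Finset.sum_sub_distrib] at hsingle
          rw [hSx, hSc]
          linarith [hj0term]
        have hmul : (1/(t:ℝ)) * (Sx + 1) ≤ (1/(t:ℝ)) * Sc :=
          mul_le_mul_of_nonneg_left hsum (by positivity)
        have hexp : (1/(t:ℝ)) * (Sx + 1) = (1/(t:ℝ)) * Sx + 1/t := by ring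
        rw [hGx, hGc, hGemp, hGemp, ← hSx, ← hSc]
        linarith
      have htend : Filter.Tendsto G (nhdsWithin c (Set.Iio c)) (nhds (G c)) :=
        (hGcont.continuousAt).tendsto.mono_left nhdsWithin_le_nhds
      have hevent' : ∀ᶠ x in nhdsWithin c (Set.Iio c), G x ≤ G c - 1/t := by
        filter_upwards [Ioo_mem_nhdsLT hcτ] with x hx
        exact hstep x hx
      have hcontra : G c ≤ G c - 1/t := le_of_tendsto htend hevent'
      have : (0:ℝ) < 1/t := by positivity
      linarith
    have hone : Gemp t (τ t) = 1 :=
      hfull t (τ t) ht1 (fun j hj => max_le (le_refl _) (hall j hj))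
    rw [hone, hεt0, hα0]
    have : (0:ℝ) < 2/t := by positivity
    linarith
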